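/- (Appendix, Lemma 9) Let p : ℕ → ℝ satisfy 0 < p(N) < 1 for all N, N·p(N)/ln N → ∞, and N·(1−p(N))/ln N → ∞ as N → ∞. For each N let Sym(N) be the probability that a random matrix A : Fin N → Fin N → Bool with i.i.d. Bernoulli(p(N)) entries admits a non-identity permutation σ of Fin N with A (σ i) j = A i j for all i, j (i.e., the partially-labeled bipartite graph is symmetric). Then for every constant w > 0, N^w · Sym(N) → 0 as N → ∞; that is, Sym(N) = O(N^{−w}) for every positive constant w. -/
import Mathlib


open Finset

attribute [local instance] Classical.propDecidable

noncomputable section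

/-- Number of `true` entries (edges) of an adjacency matrix. -/
def edgeCount {N : ℕ} (A : Fin N → Fin N → Bool) : ℕ :=
  (univ.filter fun ij : Fin N × Fin N => A ij.1 ij.2 = true).card

/-- Probability of a fixed adjacency matrix under i.i.d. Bernoulli(p) entries. -/
def matProb (N : ℕ) (p : ℝ) (A : Fin N → Fin N → Bool) : ℝ :=
  p ^ edgeCount A * (1 - p) ^ (N ^ 2 - edgeCount A)

/-- Probability that the random partially-labeled bipartite graph is symmetric, i.e. that
its row stabilizer contains a non-identity permutation. -/
def symProb (N : ℕ) (p : ℝ) : ℝ :=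
  ∑ A : Fin N → Fin N → Bool,
    if ∃ σ : Equiv.Perm (Fin N), σ ≠ 1 ∧ ∀ i j, A (σ i) j = A i j then
      matProb N p A
    else 0

-- entry weight
def ew (p : ℝ) (b : Bool) : ℝ := if b then p else 1 - p

lemma matProb_eq_prod (N : ℕ) (p : ℝ) (A : Fin N → Fin N → Bool) :
    matProb N p A = ∏ a : Fin N, ∏ j : Fin N, ew p (A a j) := by
  have h1 : (∏ a : Fin N, ∏ j : Fin N, ew p (A a j))
      = ∏ ij : Fin N × Fin N, ew p (A ij.1 ij.2) := by
    rw [← Finset.prod_product', ← Finset.univ_product_univ]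
  rw [h1, ← Finset.prod_filter_mul_prod_filter_not univ
    (fun ij : Fin N × Fin N => A ij.1 ij.2 = true)]
  have h2 : ∀ ij ∈ univ.filter (fun ij : Fin N × Fin N => A ij.1 ij.2 = true),
      ew p (A ij.1 ij.2) = p := by
    intro ij hij
    simp only [mem_filter] at hij
    simp [ew, hij.2]
  have h3 : ∀ ij ∈ univ.filter (fun ij : Fin N × Fin N => ¬ A ij.1 ij.2 = true),
      ew p (A ij.1 ij.2) = 1 - p := by
    intro ij hij
    simp only [mem_filter] at hij
    simp [ew, hij.2]
  rw [Finset.prod_congr rfl h2, Finset.prod_congr rfl h3, Finset.prod_const,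
    Finset.prod_const, matProb, edgeCount]
  congr 2
  have := Finset.card_filter_add_card_filter_not (s := (univ : Finset (Fin N × Fin N)))
    (p := fun ij : Fin N × Fin N => A ij.1 ij.2 = true)
  have hcard : (univ : Finset (Fin N × Fin N)).card = N ^ 2 := by
    simp [sq]
  omega

def rw' (N : ℕ) (p : ℝ) (r : Fin N → Bool) : ℝ := ∏ j : Fin N, ew p (r j)

lemma sum_ew (p : ℝ) : ∑ b : Bool, ew p b = 1 := by simp [ew]

lemma sum_rw (N : ℕ) (p : ℝ) : ∑ r : Fin N → Bool, rw' N p r = 1 := by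
  rw [show (1:ℝ) = ∏ j : Fin N, ∑ b : Bool, ew p b from by
    rw [Finset.prod_congr rfl (fun j _ => sum_ew p), Finset.prod_const, one_pow],
    Fintype.prod_sum]
  rfl

lemma sum_rw_sq (N : ℕ) (p : ℝ) :
    ∑ r : Fin N → Bool, (rw' N p r) ^ 2 = (p ^ 2 + (1 - p) ^ 2) ^ N := by
  have : ∀ r : Fin N → Bool, (rw' N p r) ^ 2 = ∏ j : Fin N, (ew p (r j)) ^ 2 := by
    intro r; rw [rw', ← Finset.prod_pow]
  simp_rw [this]
  rw [← Fintype.prod_sum (fun (_ : Fin N) (b : Bool) => (ew p b) ^ 2)]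
  have : ∀ j : Fin N, ∑ b : Bool, (ew p b) ^ 2 = p ^ 2 + (1 - p) ^ 2 := by
    intro j; simp [ew, add_comm]
  rw [Finset.prod_congr rfl (fun j _ => this j), Finset.prod_const, Finset.card_univ,
    Fintype.card_fin]

/-- probability that rows i and i' agree -/
lemma pair_event (N : ℕ) (p : ℝ) (i i' : Fin N) (hii : i ≠ i') :
    ∑ A ∈ univ.filter (fun A : Fin N → Fin N → Bool => A i = A i'),
      matProb N p A = (p ^ 2 + (1 - p) ^ 2) ^ N := by
  classical
  have key : ∀ A : Fin N → Fin N → Bool,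
      (if A i = A i' then matProb N p A else 0)
        = ∑ r₀ : Fin N → Bool, ∏ a : Fin N,
            (if a = i ∨ a = i' then (if A a = r₀ then rw' N p (A a) else 0)
             else rw' N p (A a)) := by
    intro A
    have hsplit : ∀ r₀ : Fin N → Bool,
        (∏ a : Fin N, (if a = i ∨ a = i' then (if A a = r₀ then rw' N p (A a) else 0)
             else rw' N p (A a)))
        = if A i = r₀ ∧ A i' = r₀ then ∏ a : Fin N, rw' N p (A a) else 0 := by
      intro r₀
      by_cases h : A i = r₀ ∧ A i' = r₀
      · rw [if_pos h]
        refine Finset.prod_congr rfl fun a _ => ?_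
        by_cases ha : a = i ∨ a = i'
        · rcases ha with ha | ha <;> subst ha <;> simp [h.1, h.2]
        · rw [if_neg ha]
      · rw [if_neg h]
        rcases not_and_or.mp h with h1 | h1
        · exact Finset.prod_eq_zero (Finset.mem_univ i) (by simp [h1])
        · exact Finset.prod_eq_zero (Finset.mem_univ i') (by simp [h1])
    simp_rw [hsplit]
    have : ∀ r₀ : Fin N → Bool, (A i = r₀ ∧ A i' = r₀) ↔ (r₀ = A i ∧ A i' = A i) := by
      intro r₀; constructor
      · rintro ⟨h1, h2⟩; exact ⟨h1.symm, h2.trans h1.symm⟩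
      · rintro ⟨h1, h2⟩; subst h1; exact ⟨rfl, h2⟩
    simp_rw [this, ite_and]
    rw [Finset.sum_ite_eq' univ (A i)
      (fun _ => if A i' = A i then ∏ a, rw' N p (A a) else 0)]
    simp only [Finset.mem_univ, if_true]
    by_cases h : A i = A i'
    · rw [if_pos h, if_pos h.symm, matProb_eq_prod]
      rfl
    · rw [if_neg h, if_neg (fun h' => h h'.symm)]
  rw [Finset.sum_filter]
  simp_rw [key]
  rw [Finset.sum_comm]
  have inner : ∀ r₀ : Fin N → Bool,
      (∑ A : Fin N → Fin N → Bool, ∏ a : Fin N,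
        (if a = i ∨ a = i' then (if A a = r₀ then rw' N p (A a) else 0)
         else rw' N p (A a))) = (rw' N p r₀) ^ 2 := by
    intro r₀
    rw [← Fintype.prod_sum (fun (a : Fin N) (r : Fin N → Bool) =>
      (if a = i ∨ a = i' then (if r = r₀ then rw' N p r else 0) else rw' N p r))]
    have hsum : ∀ a : Fin N,
        (∑ r : Fin N → Bool, (if a = i ∨ a = i' then (if r = r₀ then rw' N p r else 0)
          else rw' N p r))
        = if a ∈ ({i, i'} : Finset (Fin N)) then rw' N p r₀ else 1 := by
      intro a
      by_cases ha : a = i ∨ a = i'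
      · rw [if_pos (by simpa using ha)]
        simp_rw [if_pos ha]
        rw [Finset.sum_ite_eq' univ r₀ (fun r => rw' N p r)]
        simp
      · rw [if_neg (by simpa using ha)]
        simp_rw [if_neg ha]
        exact sum_rw N p
    rw [Finset.prod_congr rfl (fun a _ => hsum a), Finset.prod_ite_mem univ _ _,
      Finset.univ_inter, Finset.prod_const]
    congr 1
    rw [Finset.card_insert_of_notMem (by simpa using hii), Finset.card_singleton]
  rw [Finset.sum_congr rfl (fun r₀ _ => inner r₀)]
  exact sum_rw_sq N p

lemma my_sum_biUnion_le {ι α : Type*} [DecidableEq α] (s : Finset ι) (t : ι → Finset α)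
    (f : α → ℝ) (hf : ∀ a, 0 ≤ f a) :
    ∑ x ∈ s.biUnion t, f x ≤ ∑ i ∈ s, ∑ x ∈ t i, f x := by
  classical
  induction s using Finset.induction with
  | empty => simp
  | @insert a s' h ih =>
    rw [Finset.biUnion_insert, Finset.sum_insert h]
    calc ∑ x ∈ t a ∪ s'.biUnion t, f x
        ≤ ∑ x ∈ t a, f x + ∑ x ∈ s'.biUnion t, f x := by
          have := Finset.sum_union_inter (s₁ := t a) (s₂ := s'.biUnion t) (f := f)
          have h2 : 0 ≤ ∑ x ∈ t a ∩ s'.biUnion t, f x := Finset.sum_nonneg fun x _ => hf x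
          linarith
      _ ≤ ∑ x ∈ t a, f x + ∑ i ∈ s', ∑ x ∈ t i, f x := by linarith [ih]

lemma symProb_le (N : ℕ) (p : ℝ) (hp0 : 0 ≤ p) (hp1 : p ≤ 1) :
    symProb N p ≤ (N : ℝ) ^ 2 * (p ^ 2 + (1 - p) ^ 2) ^ N := by
  classical
  have hm : ∀ A : Fin N → Fin N → Bool, 0 ≤ matProb N p A := fun A =>
    mul_nonneg (pow_nonneg hp0 _) (pow_nonneg (by linarith) _)
  have h1 : symProb N p = ∑ A ∈ univ.filter (fun A : Fin N → Fin N → Bool =>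
      ∃ σ : Equiv.Perm (Fin N), σ ≠ 1 ∧ ∀ i j, A (σ i) j = A i j), matProb N p A := by
    rw [symProb, Finset.sum_filter]
  set t : Fin N × Fin N → Finset (Fin N → Fin N → Bool) :=
    fun ii => univ.filter (fun A : Fin N → Fin N → Bool => A ii.1 = A ii.2) with ht
  have hsub : univ.filter (fun A : Fin N → Fin N → Bool =>
      ∃ σ : Equiv.Perm (Fin N), σ ≠ 1 ∧ ∀ i j, A (σ i) j = A i j)
      ⊆ (univ : Finset (Fin N)).offDiag.biUnion t := by
    intro A hA
    simp only [Finset.mem_filter, Finset.mem_univ, true_and] at hA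
    obtain ⟨σ, hσ, hfix⟩ := hA
    obtain ⟨i, hi⟩ : ∃ i, σ i ≠ i := by
      by_contra h
      push_neg at h
      exact hσ (Equiv.ext fun i => h i)
    refine Finset.mem_biUnion.mpr ⟨(σ i, i), ?_, ?_⟩
    · simp [Finset.mem_offDiag, hi]
    · simp only [ht, Finset.mem_filter, Finset.mem_univ, true_and]
      exact funext fun j => hfix i j
  calc symProb N p ≤ ∑ A ∈ (univ : Finset (Fin N)).offDiag.biUnion t, matProb N p A := by
        rw [h1]
        exact Finset.sum_le_sum_of_subset_of_nonneg hsub fun A _ _ => hm A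
    _ ≤ ∑ ii ∈ (univ : Finset (Fin N)).offDiag, ∑ A ∈ t ii, matProb N p A :=
        my_sum_biUnion_le _ _ _ hm
    _ = (univ : Finset (Fin N)).offDiag.card • ((p ^ 2 + (1 - p) ^ 2) ^ N) := by
        rw [← Finset.sum_const]
        refine Finset.sum_congr rfl fun ii hii => ?_
        exact pair_event N p ii.1 ii.2 (Finset.mem_offDiag.mp hii).2.2
    _ ≤ (N : ℝ) ^ 2 * (p ^ 2 + (1 - p) ^ 2) ^ N := by
        rw [nsmul_eq_mul]
        have hq : (0:ℝ) ≤ (p ^ 2 + (1 - p) ^ 2) ^ N :=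
          pow_nonneg (by positivity) _
        have hc : ((univ : Finset (Fin N)).offDiag.card : ℝ) ≤ (N : ℝ) ^ 2 := by
          rw [Finset.offDiag_card, Finset.card_univ, Fintype.card_fin]
          have : N * N - N ≤ N ^ 2 := by nlinarith [Nat.sub_le (N * N) N]
          exact_mod_cast this
        exact mul_le_mul_of_nonneg_right hc hq

lemma symProb_nonneg (N : ℕ) (p : ℝ) (hp0 : 0 ≤ p) (hp1 : p ≤ 1) : 0 ≤ symProb N p :=
  Finset.sum_nonneg fun A _ => by
    split
    · exact mul_nonneg (pow_nonneg hp0 _) (pow_nonneg (by linarith) _)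
    · exact le_refl 0

/-- Appendix, Lemma 9: under `N·p(N)/ln N → ∞` and `N·(1−p(N))/ln N → ∞`, a random
partially-labeled bipartite graph is symmetric with probability `O(N^{−w})` for every
positive constant `w`: indeed `N^w · Sym(N) → 0`. -/
theorem partially_labeled_symmetry_rare (p : ℕ → ℝ)
    (hp : ∀ N, 0 < p N ∧ p N < 1)
    (hgrow : Filter.Tendsto (fun N : ℕ => (N : ℝ) * p N / Real.log N)
      Filter.atTop Filter.atTop)
    (hgrow' : Filter.Tendsto (fun N : ℕ => (N : ℝ) * (1 - p N) / Real.log N)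
      Filter.atTop Filter.atTop) :
    ∀ w : ℝ, 0 < w →
      Filter.Tendsto (fun N : ℕ => (N : ℝ) ^ w * symProb N (p N))
        Filter.atTop (nhds 0) := by
  intro w hw
  have hg1 := hgrow.eventually_ge_atTop (w + 3)
  have hg2 := hgrow'.eventually_ge_atTop (w + 3)
  refine squeeze_zero' (g := fun N : ℕ => ((N : ℝ))⁻¹) ?_ ?_ ?_
  · exact Filter.Eventually.of_forall fun N =>
      mul_nonneg (Real.rpow_nonneg (Nat.cast_nonneg N) w)
        (symProb_nonneg N (p N) (hp N).1.le (hp N).2.le)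
  · filter_upwards [hg1, hg2, Filter.eventually_ge_atTop 2] with N hgp hgq hN2
    set x : ℝ := (N : ℝ) with hxdef
    set P : ℝ := p N with hPdef
    have hP0 : 0 < P := (hp N).1
    have hP1 : P < 1 := (hp N).2
    have hx2 : (2 : ℝ) ≤ x := by rw [hxdef]; exact_mod_cast hN2
    have hx0 : (0 : ℝ) < x := by linarith
    have hL : 0 < Real.log x := Real.log_pos (by linarith)
    have hxp : (w + 3) * Real.log x ≤ x * P :=
      (le_div_iff₀ hL).mp hgp
    have hxq : (w + 3) * Real.log x ≤ x * (1 - P) :=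
      (le_div_iff₀ hL).mp hgq
    set q : ℝ := P ^ 2 + (1 - P) ^ 2 with hqdef
    have hq0 : 0 < q := by nlinarith
    have hpq : (w + 3) * Real.log x ≤ 2 * x * (P * (1 - P)) := by
      rcases le_total P (1/2) with h | h
      · nlinarith [mul_nonneg hx0.le hP0.le]
      · nlinarith [mul_nonneg hx0.le (by linarith : (0:ℝ) ≤ 1 - P)]
    have hlogq : Real.log q ≤ -(2 * (P * (1 - P))) := by
      have h1 := Real.log_le_sub_one_of_pos hq0
      have h2 : q - 1 = -(2 * (P * (1 - P))) := by rw [hqdef]; ring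
      linarith
    have hqN : q ^ N ≤ x ^ (-(w + 3)) := by
      have e1 : q ^ N = Real.exp ((N : ℝ) * Real.log q) := by
        rw [← Real.log_pow, Real.exp_log (pow_pos hq0 N)]
      rw [e1, Real.rpow_def_of_pos hx0]
      apply Real.exp_le_exp.mpr
      have h3 : (N : ℝ) * Real.log q ≤ (N : ℝ) * (-(2 * (P * (1 - P)))) :=
        mul_le_mul_of_nonneg_left hlogq (Nat.cast_nonneg N)
      have h4 : (N : ℝ) * (-(2 * (P * (1 - P)))) = -(2 * x * (P * (1 - P))) := by
        rw [hxdef]; ring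
      nlinarith
    have hS := symProb_le N P hP0.le hP1.le
    calc x ^ w * symProb N P ≤ x ^ w * (x ^ 2 * q ^ N) :=
          mul_le_mul_of_nonneg_left hS (Real.rpow_nonneg hx0.le w)
      _ = (x ^ w * x ^ 2) * q ^ N := by ring
      _ ≤ (x ^ w * x ^ 2) * x ^ (-(w + 3)) :=
          mul_le_mul_of_nonneg_left hqN
            (mul_nonneg (Real.rpow_nonneg hx0.le w) (by positivity))
      _ = x⁻¹ := by
          rw [← Real.rpow_natCast x 2, ← Real.rpow_add hx0, ← Real.rpow_add hx0,
            show w + (2:ℕ) + -(w + 3) = (-1 : ℝ) by push_cast; ring, Real.rpow_neg_one]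
  · exact Filter.Tendsto.inv_tendsto_atTop (tendsto_natCast_atTop_atTop)
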